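/- arXiv:1403.0330 — 4 statements merged into one kernel-verified Lean document; each statement's English description precedes it below -/
import Mathlib

section
/- Let μ be a measure on a measurable space, let h, f be nonnegative measurable functions, and let β > 0. If ∫ f^(1+β) dμ < ∞ and ∫ h^(1+β) dμ < ∞, then the density power divergence d_β(h,f) = ∫ { f^(1+β) − (1+1/β) f^β h + (1/β) h^(1+β) } dμ satisfies d_β(h,f) ≥ 0, and d_β(h,f) = 0 if and only if h = f μ-almost everywhere. -/
/-!
Pointwise, the integrand is `(a^(1+β) + β b^(1+β) - (1+β) b^β a) / β` with `a = h x`, `b = f x`,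
and Young's inequality for the conjugate exponents `1 + β` and `(1 + β)/β`, applied to `a` and
`b^β`, makes it nonnegative, with equality exactly when `a = b`. The same bound dominates the
cross term `f^β h` by integrable functions, so the integrand is a nonnegative integrable function;
its integral vanishes iff it vanishes a.e., i.e. iff `h = f` a.e.
-/

open MeasureTheory

namespace DensityPowerDivergence

/-- The integrand of `d_β(h, f)` at the values `h x = a`, `f x = b`. -/
noncomputable def integrand (β a b : ℝ) : ℝ :=
  b ^ (1 + β) - (1 + 1 / β) * b ^ β * a + (1 / β) * a ^ (1 + β)

variable {β a b : ℝ}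

lemma young_rpow_one_add (hβ : 0 < β) (ha : 0 ≤ a) (hb : 0 ≤ b) :
    a * b ^ β ≤ a ^ (1 + β) / (1 + β) + b ^ (1 + β) / ((1 + β) / β) ∧
      (a * b ^ β = a ^ (1 + β) / (1 + β) + b ^ (1 + β) / ((1 + β) / β) ↔ a = b) := by
  have hpq : (1 + β).HolderConjugate ((1 + β) / β) := by
    rw [Real.holderConjugate_iff_eq_conjExponent (by linarith), add_sub_cancel_left]
  have hpow : (b ^ β) ^ ((1 + β) / β) = b ^ (1 + β) := by
    rw [← Real.rpow_mul hb, mul_div_cancel₀ _ hβ.ne']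
  have hb' : 0 ≤ b ^ β := Real.rpow_nonneg hb β
  refine ⟨hpow ▸ Real.young_inequality_of_nonneg ha hb' hpq, ?_⟩
  rw [← hpow, Real.young_inequality_eq_iff_of_nonneg ha hb' hpq, hpow,
    Real.rpow_left_inj ha hb (by positivity)]

lemma integrand_eq (hβ : 0 < β) :
    integrand β a b =
      (1 + β) / β * (a ^ (1 + β) / (1 + β) + b ^ (1 + β) / ((1 + β) / β) - a * b ^ β) := by
  have : 1 + β ≠ 0 := by positivity
  unfold integrand
  field_simp
  ring

lemma integrand_nonneg (hβ : 0 < β) (ha : 0 ≤ a) (hb : 0 ≤ b) : 0 ≤ integrand β a b := by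
  rw [integrand_eq hβ]
  exact mul_nonneg (by positivity) (sub_nonneg.2 (young_rpow_one_add hβ ha hb).1)

lemma integrand_eq_zero_iff (hβ : 0 < β) (ha : 0 ≤ a) (hb : 0 ≤ b) :
    integrand β a b = 0 ↔ a = b := by
  rw [integrand_eq hβ, mul_eq_zero, sub_eq_zero, eq_comm (a := _ + _),
    (young_rpow_one_add hβ ha hb).2]
  have : (1 + β) / β ≠ 0 := by positivity
  simp [this]

end DensityPowerDivergence

open DensityPowerDivergence

section

variable {α : Type*} [MeasurableSpace α] {μ : Measure α} {h f : α → ℝ} {β : ℝ}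

lemma integrable_rpow_mul_of_integrable_rpow_one_add (hhm : Measurable h) (hfm : Measurable f)
    (hh0 : ∀ x, 0 ≤ h x) (hf0 : ∀ x, 0 ≤ f x) (hβ : 0 < β)
    (hfint : Integrable (fun x => f x ^ (1 + β)) μ)
    (hhint : Integrable (fun x => h x ^ (1 + β)) μ) :
    Integrable (fun x => f x ^ β * h x) μ := by
  refine ((hhint.div_const (1 + β)).add (hfint.div_const ((1 + β) / β))).mono' (by fun_prop)
    (.of_forall fun x => ?_)
  rw [Real.norm_of_nonneg (mul_nonneg (Real.rpow_nonneg (hf0 x) β) (hh0 x)), mul_comm]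
  exact (young_rpow_one_add hβ (hh0 x) (hf0 x)).1

end

/-- Let `μ` be a measure on a measurable space, let `h`, `f` be nonnegative
measurable functions, and let `β > 0`. If `∫ f^(1+β) dμ < ∞` and `∫ h^(1+β) dμ < ∞`, then the
density power divergence `d_β(h,f) = ∫ { f^(1+β) − (1+1/β) f^β h + (1/β) h^(1+β) } dμ`
satisfies `d_β(h,f) ≥ 0`, and `d_β(h,f) = 0` if and only if `h = f` μ-almost everywhere. -/
theorem dpd_nonneg_and_eq_zero_iff {α : Type*} [MeasurableSpace α] (μ : Measure α)
    (h f : α → ℝ) (hhm : Measurable h) (hfm : Measurable f)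
    (hh0 : ∀ x, 0 ≤ h x) (hf0 : ∀ x, 0 ≤ f x)
    (β : ℝ) (hβ : 0 < β)
    (hfint : Integrable (fun x => f x ^ (1 + β)) μ)
    (hhint : Integrable (fun x => h x ^ (1 + β)) μ) :
    0 ≤ (∫ x, (f x ^ (1 + β) - (1 + 1 / β) * f x ^ β * h x + (1 / β) * h x ^ (1 + β)) ∂μ) ∧
      ((∫ x, (f x ^ (1 + β) - (1 + 1 / β) * f x ^ β * h x + (1 / β) * h x ^ (1 + β)) ∂μ) = 0
        ↔ h =ᵐ[μ] f) := by
  change 0 ≤ ∫ x, integrand β (h x) (f x) ∂μ ∧ (∫ x, integrand β (h x) (f x) ∂μ = 0 ↔ _)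
  have hnonneg : 0 ≤ fun x => integrand β (h x) (f x) :=
    fun x => integrand_nonneg hβ (hh0 x) (hf0 x)
  have hcross := (integrable_rpow_mul_of_integrable_rpow_one_add hhm hfm hh0 hf0 hβ hfint
    hhint).const_mul (1 + 1 / β)
  simp only [← mul_assoc] at hcross
  have hint : Integrable (fun x => integrand β (h x) (f x)) μ :=
    (hfint.sub hcross).add (hhint.const_mul (1 / β))
  refine ⟨integral_nonneg hnonneg, ?_⟩
  rw [integral_eq_zero_iff_of_nonneg hnonneg hint]
  exact Filter.eventually_congr
    (.of_forall fun x => integrand_eq_zero_iff hβ (hh0 x) (hf0 x))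
end

section
/- Let μ ∈ ℝ, σ > 0, β ≥ 0, and let u(x) = ( (x−μ)/σ² , ((x−μ)² − σ²)/σ³ ) be the normal score vector. Then the 2×2 matrix J_β = ∫_ℝ u(x)·u(x)ᵀ·φ_{μ,σ}(x)^(1+β) dx equals ( (1+β)^(1/2) (2π)^(β/2) σ^(2+β) )^(−1) times the diagonal matrix diag( 1/(1+β) , (β²+2)/(1+β)² ). -/
/-!
Raising the normal density to the power `1 + β` gives `(2πσ²)^(-(1+β)/2) · exp (-b (x-μ)²)` with
`b = (1+β)/(2σ²)`, a Gaussian kernel of variance `σ²/(1+β)`. After centring at `μ`, the entries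
of `u uᵀ` are polynomials in `t = x - μ`: the off-diagonal one is odd and integrates to zero, and
the diagonal ones are combinations of the even Gaussian moments, which the Gamma function
recursion `Γ(s+1) = s Γ(s)` turns into `∫ t^(n+2) e^{-bt²} = (n+1)/(2b) ∫ t^n e^{-bt²}`,
starting from `∫ e^{-bt²} = √(π/b)`.
-/

open MeasureTheory

/-- The normal density with mean `μ` and standard deviation `σ`. -/
noncomputable def normalPdf (μ σ x : ℝ) : ℝ :=
  (2 * Real.pi * σ ^ 2) ^ (-(1 / 2) : ℝ) * Real.exp (-(x - μ) ^ 2 / (2 * σ ^ 2))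

/-- The normal score vector `u(x) = ( (x−μ)/σ² , ((x−μ)² − σ²)/σ³ )`. -/
noncomputable def normalScore (μ σ x : ℝ) : Fin 2 → ℝ :=
  ![(x - μ) / σ ^ 2, ((x - μ) ^ 2 - σ ^ 2) / σ ^ 3]

open Real

theorem Function.Odd.integral_eq_zero {G E : Type*} [MeasurableSpace G] [AddGroup G]
    [MeasurableNeg G] [NormedAddCommGroup E] [NormedSpace ℝ E] {f : G → E}
    (hf : Function.Odd f) (μ : Measure G) [μ.IsNegInvariant] : ∫ x, f x ∂μ = 0 := by
  have h := integral_neg_eq_self f μ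
  simp only [hf _, integral_neg] at h
  have h_two : (2 : ℝ) • ∫ x, f x ∂μ = 0 := by
    rw [two_smul]
    nth_rw 1 [← h]
    exact neg_add_cancel _
  exact (smul_eq_zero.mp h_two).resolve_left two_ne_zero

section GaussianMoments

variable {b : ℝ}

theorem integrable_pow_mul_exp_neg_mul_sq (hb : 0 < b) (n : ℕ) :
    Integrable fun x : ℝ ↦ x ^ n * exp (-b * x ^ 2) := by
  simpa only [rpow_natCast] using
    integrable_rpow_mul_exp_neg_mul_sq hb (neg_one_lt_zero.trans_le n.cast_nonneg)

theorem integral_pow_mul_exp_neg_mul_sq_of_even (hb : 0 < b) {n : ℕ} (hn : Even n) :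
    ∫ x : ℝ, x ^ n * exp (-b * x ^ 2) = b ^ (-((n : ℝ) + 1) / 2) * Gamma (((n : ℝ) + 1) / 2) := by
  have h_abs_eq : ∀ x : ℝ, |x| ^ n * exp (-b * |x| ^ 2) = x ^ n * exp (-b * x ^ 2) := fun x ↦ by
    rw [hn.pow_abs, sq_abs]
  have h_half := integral_rpow_mul_exp_neg_mul_rpow two_pos
    (neg_one_lt_zero.trans_le n.cast_nonneg) hb
  simp only [rpow_two, rpow_natCast] at h_half
  have h_symm := integral_comp_abs (f := fun x ↦ x ^ n * exp (-b * x ^ 2))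
  simp only [h_abs_eq] at h_symm
  rw [h_symm, h_half]
  ring

theorem integral_pow_add_two_mul_exp_neg_mul_sq (hb : 0 < b) {n : ℕ} (hn : Even n) :
    ∫ x : ℝ, x ^ (n + 2) * exp (-b * x ^ 2) =
      (n + 1) / (2 * b) * ∫ x : ℝ, x ^ n * exp (-b * x ^ 2) := by
  rw [integral_pow_mul_exp_neg_mul_sq_of_even hb hn,
    integral_pow_mul_exp_neg_mul_sq_of_even hb (hn.add even_two)]
  have hΓ : Gamma ((((n + 2 : ℕ) : ℝ) + 1) / 2) = (n + 1) / 2 * Gamma (((n : ℝ) + 1) / 2) := by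
    rw [show (((n + 2 : ℕ) : ℝ) + 1) / 2 = ((n : ℝ) + 1) / 2 + 1 by push_cast; ring,
      Gamma_add_one (by positivity)]
  have hpow : b ^ (-(((n + 2 : ℕ) : ℝ) + 1) / 2) = b⁻¹ * b ^ (-((n : ℝ) + 1) / 2) := by
    rw [← rpow_neg_one, ← rpow_add hb]
    congr 1; push_cast; ring
  rw [hΓ, hpow]
  field_simp

end GaussianMoments

theorem normalPdf_rpow (μ σ β x : ℝ) :
    normalPdf μ σ x ^ (1 + β) =
      (2 * π * σ ^ 2) ^ (-(1 + β) / 2) * exp (-((1 + β) / (2 * σ ^ 2)) * (x - μ) ^ 2) := by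
  rw [normalPdf, mul_rpow (by positivity) (exp_pos _).le, ← rpow_mul (by positivity), ← exp_mul]
  congr 2 <;> ring

theorem normalScore_eq_normalScore_zero (μ σ x : ℝ) :
    normalScore μ σ x = normalScore 0 σ (x - μ) := by
  simp [normalScore]

theorem integral_comp_sub_mul_normalPdf_rpow (g : ℝ → ℝ) (μ σ β : ℝ) :
    ∫ x, g (x - μ) * normalPdf μ σ x ^ (1 + β) =
      (2 * π * σ ^ 2) ^ (-(1 + β) / 2) * ∫ t, g t * exp (-((1 + β) / (2 * σ ^ 2)) * t ^ 2) := by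
  simp_rw [normalPdf_rpow, mul_left_comm (g _)]
  rw [integral_const_mul,
    integral_sub_right_eq_self (fun t ↦ g t * exp (-((1 + β) / (2 * σ ^ 2)) * t ^ 2)) μ]

/-- The left-hand side is `∫ φ_{μ,σ}^(1+β)`, by `integral_comp_sub_mul_normalPdf_rpow` and
`integral_gaussian`. -/
theorem rpow_mul_sqrt_pi_div_eq {σ β : ℝ} (hσ : 0 < σ) (hβ : -1 < β) :
    (2 * π * σ ^ 2) ^ (-(1 + β) / 2) * √(π / ((1 + β) / (2 * σ ^ 2))) =
      σ ^ 2 * ((1 + β) ^ ((1 : ℝ) / 2) * (2 * π) ^ (β / 2) * σ ^ (2 + β))⁻¹ := by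
  have h1β : 0 < 1 + β := by linarith
  rw [sqrt_eq_rpow, show π / ((1 + β) / (2 * σ ^ 2)) = (2 * π * σ ^ 2) / (1 + β) by field_simp,
    div_rpow (by positivity) h1β.le, mul_div_assoc', ← rpow_add (by positivity),
    mul_rpow (by positivity) (by positivity), ← rpow_natCast_mul hσ.le, rpow_add hσ, rpow_two]
  rw [show -(1 + β) / 2 + 1 / 2 = -(β / 2) by ring, show ((2 : ℕ) : ℝ) * -(β / 2) = -β by
    push_cast; ring, rpow_neg (by positivity), rpow_neg hσ.le]
  field_simp

theorem integral_normalScore_mul_normalScore_mul_exp_neg_mul_sq (σ : ℝ) {b : ℝ} (hb : 0 < b) :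
    (Matrix.of fun i j ↦ ∫ t, normalScore 0 σ t i * normalScore 0 σ t j * exp (-b * t ^ 2)) =
      √(π / b) •
        Matrix.diagonal ![1 / (2 * b * σ ^ 4), (3 / (4 * b ^ 2) - σ ^ 2 / b + σ ^ 4) / σ ^ 6] := by
  have m0 := integral_gaussian b
  have m2 := integral_pow_add_two_mul_exp_neg_mul_sq hb (n := 0) Even.zero
  have m4 := integral_pow_add_two_mul_exp_neg_mul_sq hb (n := 2) even_two
  simp only [zero_add, pow_zero, one_mul, CharP.cast_eq_zero, m0] at m2
  simp only [Nat.reduceAdd, m2, Nat.cast_ofNat] at m4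
  have h_odd : Function.Odd fun t ↦ t / σ ^ 2 * ((t ^ 2 - σ ^ 2) / σ ^ 3) * exp (-b * t ^ 2) :=
    fun t ↦ by simp only [even_two, Even.neg_pow]; ring
  ext i j
  fin_cases i <;> fin_cases j <;>
    simp only [Fin.zero_eta, Fin.mk_one, Matrix.of_apply, Matrix.smul_apply, smul_eq_mul,
      Matrix.diagonal_apply_eq, Matrix.diagonal_apply_ne _ zero_ne_one,
      Matrix.diagonal_apply_ne _ one_ne_zero, mul_zero, normalScore, sub_zero,
      Matrix.cons_val_zero, Matrix.cons_val_one, Matrix.cons_val_fin_one]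
  · calc
      _ = ∫ t, (σ ^ 4)⁻¹ * (t ^ 2 * exp (-b * t ^ 2)) := by congr with t; ring
      _ = _ := by rw [integral_const_mul, m2]; ring
  · exact h_odd.integral_eq_zero volume
  · simpa only [mul_comm (_ / σ ^ 3)] using h_odd.integral_eq_zero volume
  · have i0 := integrable_exp_neg_mul_sq hb
    have i2 := integrable_pow_mul_exp_neg_mul_sq hb 2
    have i4 := integrable_pow_mul_exp_neg_mul_sq hb 4
    have i42 : Integrable fun t : ℝ ↦
        t ^ 4 * exp (-b * t ^ 2) - 2 * σ ^ 2 * (t ^ 2 * exp (-b * t ^ 2)) :=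
      i4.sub (i2.const_mul _)
    calc
      _ = ∫ t, (σ ^ 6)⁻¹ * (t ^ 4 * exp (-b * t ^ 2) - 2 * σ ^ 2 * (t ^ 2 * exp (-b * t ^ 2))
            + σ ^ 4 * exp (-b * t ^ 2)) := by congr with t; ring
      _ = _ := by
        rw [integral_const_mul, integral_add i42 (i0.const_mul _),
          integral_sub i4 (i2.const_mul _), integral_const_mul, integral_const_mul, m0, m2, m4]
        ring

/-- Let `μ ∈ ℝ`, `σ > 0`, `β ≥ 0`, and `u` the normal score vector. Then the
2×2 matrix `J_β = ∫ u uᵀ φ_{μ,σ}^(1+β) dx` equals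
`( (1+β)^(1/2) (2π)^(β/2) σ^(2+β) )⁻¹ · diag( 1/(1+β), (β²+2)/(1+β)² )`. -/
theorem normal_J_beta (μ σ β : ℝ) (hσ : 0 < σ) (hβ : 0 ≤ β) :
    (Matrix.of fun i j : Fin 2 =>
        ∫ x : ℝ, normalScore μ σ x i * normalScore μ σ x j * normalPdf μ σ x ^ (1 + β)) =
      ((1 + β) ^ ((1 : ℝ) / 2) * (2 * Real.pi) ^ (β / 2) * σ ^ (2 + β))⁻¹ •
        Matrix.diagonal ![1 / (1 + β), (β ^ 2 + 2) / (1 + β) ^ 2] := by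
  have hb : 0 < (1 + β) / (2 * σ ^ 2) := by positivity
  have h_shift : (Matrix.of fun i j : Fin 2 =>
        ∫ x : ℝ, normalScore μ σ x i * normalScore μ σ x j * normalPdf μ σ x ^ (1 + β)) =
      (2 * π * σ ^ 2) ^ (-(1 + β) / 2) • Matrix.of fun i j ↦ ∫ t, normalScore 0 σ t i *
        normalScore 0 σ t j * exp (-((1 + β) / (2 * σ ^ 2)) * t ^ 2) := by
    ext i j
    simpa only [Matrix.of_apply, Matrix.smul_apply, smul_eq_mul,
      normalScore_eq_normalScore_zero μ] using
      integral_comp_sub_mul_normalPdf_rpow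
        (fun t ↦ normalScore 0 σ t i * normalScore 0 σ t j) μ σ β
  rw [h_shift, integral_normalScore_mul_normalScore_mul_exp_neg_mul_sq σ hb, smul_smul,
    rpow_mul_sqrt_pi_div_eq hσ (by linarith), mul_comm, ← smul_smul, ← Matrix.diagonal_smul]
  congr 2
  ext i
  fin_cases i <;>
    simp only [Fin.zero_eta, Fin.mk_one, Pi.smul_apply, smul_eq_mul, Matrix.cons_val_zero,
      Matrix.cons_val_one, Matrix.cons_val_fin_one]
  · field_simp
  · field_simp
    ring
end

section
/- Let σ > 0, p > 0, β > 0 and α ∈ ℝ with βp − β + α + 1 > 0. Then ∫₀^∞ (x/σ)^α · f_{σ,p}(x)^β dx = (p/σ)^(β−1) · β^(−(βp−β+α+1)/p) · Γ( (βp−β+α+1)/p ), where Γ is the Gamma function. -/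
open MeasureTheory

/-- The Weibull density with scale `σ > 0` and shape `p > 0`:
`f_{σ,p}(x) = (p/σ)(x/σ)^(p−1) exp(−(x/σ)^p)` for `x > 0` and `0` otherwise. -/
noncomputable def weibullPdf (σ p x : ℝ) : ℝ :=
  if 0 < x then (p / σ) * (x / σ) ^ (p - 1) * Real.exp (-(x / σ) ^ p) else 0

/-!
On `(0, ∞)` the integrand is `(p/σ)^β (x/σ)^(β(p-1)+α) exp(-β (x/σ)^p)`; substituting `t = x/σ`
reduces the integral to the Gamma-type integral `∫₀^∞ t^q exp(-b t^p) dt = b^(-(q+1)/p) Γ((q+1)/p) / p`.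
-/

open Real Set

theorem rpow_mul_weibullPdf_rpow {σ p x : ℝ} (hσ : 0 < σ) (hp : 0 < p) (hx : 0 < x) (α β : ℝ) :
    (x / σ) ^ α * weibullPdf σ p x ^ β =
      (p / σ) ^ β * ((x / σ) ^ (β * (p - 1) + α) * exp (-β * (x / σ) ^ p)) := by
  have hxσ : 0 < x / σ := div_pos hx hσ
  rw [weibullPdf, if_pos hx, mul_rpow (by positivity) (exp_pos _).le,
    mul_rpow (div_pos hp hσ).le (rpow_nonneg hxσ.le _), ← rpow_mul hxσ.le, ← exp_mul,
    rpow_add hxσ]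
  ring_nf

theorem integral_div_rpow_mul_exp_neg_mul_div_rpow {σ p q b : ℝ} (hσ : 0 < σ) (hp : 0 < p)
    (hq : -1 < q) (hb : 0 < b) :
    ∫ x in Ioi (0 : ℝ), (x / σ) ^ q * exp (-b * (x / σ) ^ p) =
      σ * (b ^ (-(q + 1) / p) * (1 / p) * Gamma ((q + 1) / p)) := by
  have h := integral_comp_mul_left_Ioi (fun t => t ^ q * exp (-b * t ^ p)) 0 (inv_pos.mpr hσ)
  simp only [mul_zero, smul_eq_mul, inv_inv, ← div_eq_inv_mul] at h
  rw [h, integral_rpow_mul_exp_neg_mul_rpow hp hq hb]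

/-- Let `σ > 0`, `p > 0`, `β > 0` and `α ∈ ℝ` with `βp − β + α + 1 > 0`. Then
`∫₀^∞ (x/σ)^α · f_{σ,p}(x)^β dx
  = (p/σ)^(β−1) · β^(−(βp−β+α+1)/p) · Γ((βp−β+α+1)/p)`. -/
theorem weibull_xi_integral (σ p β α : ℝ) (hσ : 0 < σ) (hp : 0 < p) (hβ : 0 < β)
    (hα : 0 < β * p - β + α + 1) :
    ∫ x in Set.Ioi (0 : ℝ), (x / σ) ^ α * weibullPdf σ p x ^ β =
      (p / σ) ^ (β - 1) * β ^ (-(β * p - β + α + 1) / p) *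
        Real.Gamma ((β * p - β + α + 1) / p) := by
  have hexp : β * (p - 1) + α + 1 = β * p - β + α + 1 := by ring
  rw [setIntegral_congr_fun measurableSet_Ioi fun x hx => rpow_mul_weibullPdf_rpow hσ hp hx α β,
    integral_const_mul,
    integral_div_rpow_mul_exp_neg_mul_div_rpow hσ hp (by linarith) hβ, hexp,
    rpow_sub (div_pos hp hσ), rpow_one]
  field_simp
end

section
/- Let σ₁, σ₂ > 0 and p₁, p₂ > 0. Then the Kullback–Leibler divergence between the two Weibull densities satisfies ∫₀^∞ f_{σ₁,p₁}(x) · log( f_{σ₁,p₁}(x) / f_{σ₂,p₂}(x) ) dx = log(p₁/σ₁) − log(p₂/σ₂) − (p₂ − 1)·( log σ₁ − log σ₂ ) − (p₁ − p₂)·γ_E/p₁ + (σ₁/σ₂)^(p₂) · Γ(1 + p₂/p₁) − 1, where γ_E is the Euler–Mascheroni constant and Γ is the Gamma function. -/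
/-! Substituting `x = σ₁ u^{1/p₁}` turns `f_{σ₁,p₁}(x) dx` into `e^{-u} du` and the log-likelihood
ratio into `A + (1 - p₂/p₁) log u - u + (σ₁/σ₂)^{p₂} u^{p₂/p₁}` for a constant `A`. The claim then
follows from `∫₀^∞ e^{-u} u^s du = Γ(s + 1)` and `∫₀^∞ e^{-u} log u du = Γ'(1) = -γ`. -/

open MeasureTheory

section

open Real Set Filter Asymptotics Topology

lemma weibullPdf_of_pos {σ p x : ℝ} (hx : 0 < x) :
    weibullPdf σ p x = p / σ * (x / σ) ^ (p - 1) * exp (-(x / σ) ^ p) :=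
  if_pos hx

lemma weibullPdf_pos {σ p x : ℝ} (hσ : 0 < σ) (hp : 0 < p) (hx : 0 < x) :
    0 < weibullPdf σ p x := by
  have : 0 < x / σ := div_pos hx hσ
  rw [weibullPdf_of_pos hx]
  positivity

lemma log_weibullPdf {σ p x : ℝ} (hσ : 0 < σ) (hp : p ≠ 0) (hx : 0 < x) :
    log (weibullPdf σ p x) = log (p / σ) + (p - 1) * log (x / σ) - (x / σ) ^ p := by
  have hxσ : 0 < x / σ := div_pos hx hσ
  have hcoef : p / σ ≠ 0 := div_ne_zero hp hσ.ne'
  have hpow : (x / σ) ^ (p - 1) ≠ 0 := (rpow_pos_of_pos hxσ _).ne'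
  rw [weibullPdf_of_pos hx, log_mul (mul_ne_zero hcoef hpow) (exp_ne_zero _),
    log_mul hcoef hpow, log_exp, log_rpow hxσ]
  ring

lemma setIntegral_weibullPdf_mul {σ p : ℝ} (hσ : 0 < σ) (hp : 0 < p) (h : ℝ → ℝ) :
    ∫ x in Ioi 0, weibullPdf σ p x * h x = ∫ u in Ioi 0, exp (-u) * h (σ * u ^ p⁻¹) := by
  have hscale := integral_comp_mul_left_Ioi (fun x => weibullPdf σ p x * h x) 0 hσ
  rw [mul_zero, smul_eq_mul] at hscale
  calc ∫ x in Ioi 0, weibullPdf σ p x * h x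
      = σ * ∫ t in Ioi 0, weibullPdf σ p (σ * t) * h (σ * t) := by
        rw [hscale, mul_inv_cancel_left₀ hσ.ne']
    _ = ∫ t in Ioi 0, σ * (weibullPdf σ p (σ * t) * h (σ * t)) := (integral_const_mul _ _).symm
    _ = ∫ t in Ioi 0, (p * t ^ (p - 1)) • (exp (-t ^ p) * h (σ * (t ^ p) ^ p⁻¹)) :=
        setIntegral_congr_fun measurableSet_Ioi fun t ht => by
          rw [weibullPdf_of_pos (mul_pos hσ ht), ← rpow_mul ht.le, mul_inv_cancel₀ hp.ne',
            rpow_one, mul_div_cancel_left₀ _ hσ.ne', smul_eq_mul]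
          field_simp
    _ = _ := integral_comp_rpow_Ioi_of_pos (g := fun u => exp (-u) * h (σ * u ^ p⁻¹)) hp

lemma integrableOn_exp_neg_mul_rpow {s : ℝ} (hs : -1 < s) :
    IntegrableOn (fun u => exp (-u) * u ^ s) (Ioi 0) := by
  simpa using GammaIntegral_convergent (s := s + 1) (by linarith)

lemma integral_exp_neg_mul_rpow_eq_Gamma {s : ℝ} (hs : -1 < s) :
    ∫ u in Ioi 0, exp (-u) * u ^ s = Gamma (s + 1) := by
  simpa using (Gamma_eq_integral (s := s + 1) (by linarith)).symm

lemma integrableOn_exp_neg_mul_log : IntegrableOn (fun u => exp (-u) * log u) (Ioi 0) := by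
  have hlocal : LocallyIntegrableOn (fun u => log u * exp (-u)) (Ioi 0) :=
    ((continuousOn_log.mono fun _ hu => ne_of_gt hu).mul
      (continuous_exp.comp continuous_neg).continuousOn).locallyIntegrableOn measurableSet_Ioi
  have hexp_top : (fun u => exp (-u)) =O[atTop] (· ^ (-3 : ℝ)) := by
    simpa only [neg_one_mul] using (isLittleO_exp_neg_mul_rpow_atTop zero_lt_one _).isBigO
  have hexp_zero : (fun u => exp (-u)) =O[𝓝[>] 0] (· ^ (-(0 : ℝ))) := by
    simp only [neg_zero, rpow_zero]
    refine isBigO_const_of_tendsto (y := 1) ?_ one_ne_zero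
    simpa using ((by fun_prop : Continuous fun u => exp (-u)).tendsto 0).mono_left
      nhdsWithin_le_nhds
  have htop : (fun u => log u * exp (-u)) =O[atTop] (· ^ (-(2 : ℝ))) := by
    simpa [smul_eq_mul] using isBigO_rpow_top_log_smul (by norm_num : (2 : ℝ) < 3) hexp_top
  have hzero : (fun u => log u * exp (-u)) =O[𝓝[>] 0] (· ^ (-(1 / 2 : ℝ))) := by
    simpa [smul_eq_mul] using isBigO_rpow_zero_log_smul (by norm_num : (0 : ℝ) < 1 / 2) hexp_zero
  simpa [mul_comm] using
    mellin_convergent_of_isBigO_scalar (s := 1) hlocal htop (by norm_num) hzero (by norm_num)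

/-- Differentiate `Γ(s) = ∫ e^{-u} u^{s-1} du` under the integral sign at `s = 1`. -/
lemma integral_exp_neg_mul_log : ∫ u in Ioi 0, exp (-u) * log u = -eulerMascheroniConstant := by
  have hderiv : HasDerivAt Complex.Gamma
      (∫ u in Ioi (0 : ℝ), (u : ℂ) ^ ((1 : ℂ) - 1) * (log u * exp (-u))) 1 :=
    (Complex.hasDerivAt_GammaIntegral (by norm_num)).congr_of_eventuallyEq <| by
      filter_upwards [(isOpen_lt continuous_const Complex.continuous_re).mem_nhds
        (by norm_num : (0 : ℝ) < (1 : ℂ).re)] with s hs using Complex.Gamma_eq_integral hs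
  have := hderiv.unique Complex.hasDerivAt_Gamma_one
  simp only [sub_self, Complex.cpow_zero, one_mul] at this
  rw [← Complex.ofReal_inj, Complex.ofReal_neg, ← this, ← integral_complex_ofReal]
  refine setIntegral_congr_fun measurableSet_Ioi fun u _ => ?_
  push_cast
  ring

lemma integral_exp_neg_mul_add_mul_log_sub_add_mul_rpow (a b c : ℝ) {q : ℝ} (hq : -1 < q) :
    ∫ u in Ioi 0, exp (-u) * (a + c * log u - u + b * u ^ q) =
      a - c * eulerMascheroniConstant - 1 + b * Gamma (q + 1) := by
  have hexp : IntegrableOn (fun u => exp (-u)) (Ioi 0) := by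
    simpa using integrableOn_exp_neg_mul_rpow (s := 0) (by norm_num)
  have hid : IntegrableOn (fun u => exp (-u) * u) (Ioi 0) := by
    simpa using integrableOn_exp_neg_mul_rpow (s := 1) (by norm_num)
  have hid_eq : ∫ u in Ioi 0, exp (-u) * u = 1 := by
    simpa [one_add_one_eq_two] using integral_exp_neg_mul_rpow_eq_Gamma (s := 1) (by norm_num)
  calc ∫ u in Ioi 0, exp (-u) * (a + c * log u - u + b * u ^ q)
      = ∫ u in Ioi 0, a * exp (-u) + c * (exp (-u) * log u) - exp (-u) * u
          + b * (exp (-u) * u ^ q) := by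
        congr 1 with u; ring
    _ = a * (∫ u in Ioi 0, exp (-u)) + c * (∫ u in Ioi 0, exp (-u) * log u)
          - (∫ u in Ioi 0, exp (-u) * u) + b * ∫ u in Ioi 0, exp (-u) * u ^ q := by
        have hlog := integrableOn_exp_neg_mul_log.const_mul c
        have hsum : IntegrableOn (fun u => a * exp (-u) + c * (exp (-u) * log u)) (Ioi 0) :=
          (hexp.const_mul a).add hlog
        have hdiff : IntegrableOn
            (fun u => a * exp (-u) + c * (exp (-u) * log u) - exp (-u) * u) (Ioi 0) :=
          hsum.sub hid
        rw [integral_add hdiff ((integrableOn_exp_neg_mul_rpow hq).const_mul b),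
          integral_sub hsum hid, integral_add (hexp.const_mul a) hlog,
          integral_const_mul, integral_const_mul, integral_const_mul]
    _ = _ := by
        rw [integral_exp_neg_Ioi_zero, integral_exp_neg_mul_log, hid_eq,
          integral_exp_neg_mul_rpow_eq_Gamma hq]
        ring

lemma log_weibullPdf_div_weibullPdf {σ₁ σ₂ p₁ p₂ u : ℝ} (hσ₁ : 0 < σ₁) (hσ₂ : 0 < σ₂)
    (hp₁ : 0 < p₁) (hp₂ : 0 < p₂) (hu : 0 < u) :
    log (weibullPdf σ₁ p₁ (σ₁ * u ^ p₁⁻¹) / weibullPdf σ₂ p₂ (σ₁ * u ^ p₁⁻¹)) =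
      log (p₁ / σ₁) - log (p₂ / σ₂) - (p₂ - 1) * (log σ₁ - log σ₂) + (p₁ - p₂) / p₁ * log u - u
        + (σ₁ / σ₂) ^ p₂ * u ^ (p₂ / p₁) := by
  have hx : 0 < σ₁ * u ^ p₁⁻¹ := by positivity
  have hlog_root : log (u ^ p₁⁻¹) = p₁⁻¹ * log u := log_rpow hu _
  have hx₁ : σ₁ * u ^ p₁⁻¹ / σ₁ = u ^ p₁⁻¹ := by field_simp
  have hx₂ : σ₁ * u ^ p₁⁻¹ / σ₂ = σ₁ / σ₂ * u ^ p₁⁻¹ := by ring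
  rw [log_div (weibullPdf_pos hσ₁ hp₁ hx).ne' (weibullPdf_pos hσ₂ hp₂ hx).ne',
    log_weibullPdf hσ₁ hp₁.ne' hx, log_weibullPdf hσ₂ hp₂.ne' hx, hx₁, hx₂,
    log_mul (by positivity) (by positivity), log_div hσ₁.ne' hσ₂.ne', hlog_root,
    ← rpow_mul hu.le, inv_mul_cancel₀ hp₁.ne', rpow_one, mul_rpow (by positivity) (by positivity),
    ← rpow_mul hu.le, inv_mul_eq_div]
  field_simp
  ring

end

/-- Let `σ₁, σ₂ > 0` and `p₁, p₂ > 0`. Then the Kullback–Leibler divergence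
between the two Weibull densities satisfies
`∫₀^∞ f_{σ₁,p₁}(x) · log( f_{σ₁,p₁}(x) / f_{σ₂,p₂}(x) ) dx
  = log(p₁/σ₁) − log(p₂/σ₂) − (p₂ − 1)·(log σ₁ − log σ₂) − (p₁ − p₂)·γ_E/p₁
    + (σ₁/σ₂)^(p₂) · Γ(1 + p₂/p₁) − 1`. -/
theorem kl_weibull_weibull (σ₁ σ₂ p₁ p₂ : ℝ)
    (hσ₁ : 0 < σ₁) (hσ₂ : 0 < σ₂) (hp₁ : 0 < p₁) (hp₂ : 0 < p₂) :
    ∫ x in Set.Ioi (0 : ℝ),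
        weibullPdf σ₁ p₁ x * Real.log (weibullPdf σ₁ p₁ x / weibullPdf σ₂ p₂ x) =
      Real.log (p₁ / σ₁) - Real.log (p₂ / σ₂) - (p₂ - 1) * (Real.log σ₁ - Real.log σ₂) -
          (p₁ - p₂) * Real.eulerMascheroniConstant / p₁ +
        (σ₁ / σ₂) ^ p₂ * Real.Gamma (1 + p₂ / p₁) - 1 := by
  have hq : -1 < p₂ / p₁ := by linarith [div_pos hp₂ hp₁]
  rw [setIntegral_weibullPdf_mul hσ₁ hp₁,
    setIntegral_congr_fun measurableSet_Ioi fun u (hu : 0 < u) =>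
      congrArg (Real.exp (-u) * ·) (log_weibullPdf_div_weibullPdf hσ₁ hσ₂ hp₁ hp₂ hu),
    integral_exp_neg_mul_add_mul_log_sub_add_mul_rpow _ _ _ hq, add_comm (p₂ / p₁)]
  ring
end
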